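/- The extremal function of any staircase 0-1 matrix A is linear: there exists a constant C > 0 such that ex(n, A) ≤ C·n for all positive integers n. -/

import Mathlib

set_option maxHeartbeats 1000000

/-- An edge-ordered graph: a finite simple graph together with an injective
real labeling of its edges (inducing a linear order on the edge set). -/
structure EOGraph (V : Type) [Fintype V] where
  graph : SimpleGraph V
  label : Sym2 V → ℝ
  inj : ∀ e ∈ graph.edgeSet, ∀ f ∈ graph.edgeSet, label e = label f → e = f

/-- `G` contains `H`: an injective, adjacency-preserving, edge-order-respecting map. -/
def EOContains {V W : Type} [Fintype V] [Fintype W] (G : EOGraph V) (H : EOGraph W) : Prop :=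
  ∃ f : W → V, Function.Injective f ∧
    (∀ a b, H.graph.Adj a b → G.graph.Adj (f a) (f b)) ∧
    ∀ e ∈ H.graph.edgeSet, ∀ e' ∈ H.graph.edgeSet,
      H.label e < H.label e' → G.label (Sym2.map f e) < G.label (Sym2.map f e')

/-- The Turán number `ex_<(n, H)`: the maximum number of edges of an
edge-ordered graph on `n` vertices avoiding `H`. -/
noncomputable def exLT {W : Type} [Fintype W] (n : ℕ) (H : EOGraph W) : ℕ :=
  sSup {m | ∃ G : EOGraph (Fin n), ¬ EOContains G H ∧ G.graph.edgeSet.ncard = m}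

/-- The reverse of an edge-ordered graph: same graph, reversed edge order. -/
def EOGraph.reverse {V : Type} [Fintype V] (G : EOGraph V) : EOGraph V where
  graph := G.graph
  label := fun e => - G.label e
  inj := fun e he f hf h => G.inj e he f hf (neg_inj.mp h)

/-- Two edges (as elements of `Sym2 V`) are adjacent if they share a vertex. -/
def EdgesAdjacent {V : Type} (e f : Sym2 V) : Prop := ∃ v, v ∈ e ∧ v ∈ f

/-- `e` and `f` are consecutive edges of `G`: `e < f` with no edge strictly in between. -/
def Consecutive {V : Type} [Fintype V] (G : EOGraph V) (e f : Sym2 V) : Prop :=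
  e ∈ G.graph.edgeSet ∧ f ∈ G.graph.edgeSet ∧ G.label e < G.label f ∧
    ¬ ∃ g ∈ G.graph.edgeSet, G.label e < G.label g ∧ G.label g < G.label f

/-- A semi-caterpillar: the underlying graph is a tree with at least one edge, and any
pair of consecutive edges is adjacent or directly connected by an edge larger than both. -/
def IsSemiCaterpillar {V : Type} [Fintype V] (G : EOGraph V) : Prop :=
  G.graph.IsTree ∧ G.graph.edgeSet.Nonempty ∧
  ∀ e f, Consecutive G e f →
    EdgesAdjacent e f ∨
    ∃ u v, s(u, v) ∈ G.graph.edgeSet ∧ u ∈ e ∧ v ∈ f ∧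
      G.label e < G.label s(u, v) ∧ G.label f < G.label s(u, v)

/-- The order chromatic number of `G` is at most `k`: there is a simple graph `H` with
chromatic number at most `k` all of whose edge-orderings contain `G`. -/
def OrderChromAtMost {V : Type} [Fintype V] (G : EOGraph V) (k : ℕ) : Prop :=
  ∃ (m : ℕ) (H : SimpleGraph (Fin m)), H.chromaticNumber ≤ (k : ℕ∞) ∧
    ∀ K : EOGraph (Fin m), K.graph = H → EOContains K G

/-- The order chromatic number of `G` equals 2. -/
def HasOrderChrom2 {V : Type} [Fintype V] (G : EOGraph V) : Prop :=
  OrderChromAtMost G 2 ∧ ¬ OrderChromAtMost G 1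

/-- A vertex is close if the edges incident to it form an interval in the edge order. -/
def CloseVertex {V : Type} [Fintype V] (G : EOGraph V) (v : V) : Prop :=
  ∀ e ∈ G.graph.edgeSet, ∀ f ∈ G.graph.edgeSet, ∀ g ∈ G.graph.edgeSet,
    v ∈ e → v ∈ g → G.label e ≤ G.label f → G.label f ≤ G.label g → v ∈ f

/-- An edge-ordered bigraph: an edge-ordered graph with a proper 2-coloring of the
vertices into left (`false`) and right (`true`) vertices. -/
structure EOBigraph (V : Type) [Fintype V] where
  toEOGraph : EOGraph V
  side : V → Bool
  proper : ∀ u v, toEOGraph.graph.Adj u v → side u ≠ side v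

/-- A right caterpillar: an edge-ordered bigraph whose underlying edge-ordered graph is a
semi-caterpillar and all of whose right vertices are close. -/
def IsRightCaterpillar {V : Type} [Fintype V] (B : EOBigraph V) : Prop :=
  IsSemiCaterpillar B.toEOGraph ∧ ∀ v, B.side v = true → CloseVertex B.toEOGraph v

/-- Containment of edge-ordered bigraphs: additionally sides must be preserved. -/
def BContains {V W : Type} [Fintype V] [Fintype W] (G : EOBigraph V) (H : EOBigraph W) : Prop :=
  ∃ f : W → V, Function.Injective f ∧
    (∀ a b, H.toEOGraph.graph.Adj a b → G.toEOGraph.graph.Adj (f a) (f b)) ∧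
    (∀ e ∈ H.toEOGraph.graph.edgeSet, ∀ e' ∈ H.toEOGraph.graph.edgeSet,
      H.toEOGraph.label e < H.toEOGraph.label e' →
        G.toEOGraph.label (Sym2.map f e) < G.toEOGraph.label (Sym2.map f e')) ∧
    ∀ a, G.side (f a) = H.side a

/-- Isomorphism of edge-ordered bigraphs. -/
def BIsoTo {V W : Type} [Fintype W] [Fintype V] (H : EOBigraph W) (G : EOBigraph V) : Prop :=
  ∃ f : W ≃ V, (∀ a b, H.toEOGraph.graph.Adj a b ↔ G.toEOGraph.graph.Adj (f a) (f b)) ∧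
    (∀ e ∈ H.toEOGraph.graph.edgeSet, ∀ e' ∈ H.toEOGraph.graph.edgeSet,
      (H.toEOGraph.label e < H.toEOGraph.label e' ↔
        G.toEOGraph.label (Sym2.map f e) < G.toEOGraph.label (Sym2.map f e'))) ∧
    ∀ a, G.side (f a) = H.side a

/-- Isomorphism of edge-ordered graphs. -/
def EOIsoTo {V W : Type} [Fintype W] [Fintype V] (H : EOGraph W) (G : EOGraph V) : Prop :=
  ∃ f : W ≃ V, (∀ a b, H.graph.Adj a b ↔ G.graph.Adj (f a) (f b)) ∧
    ∀ e ∈ H.graph.edgeSet, ∀ e' ∈ H.graph.edgeSet,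
      (H.label e < H.label e' ↔ G.label (Sym2.map f e) < G.label (Sym2.map f e'))

/-- The labeling of the path graph on `Fin k` in which the edge `{i, i+1}` gets label `w i`. -/
def pathLabel {k : ℕ} (w : Fin k → ℝ) : Sym2 (Fin k) → ℝ :=
  Sym2.lift ⟨fun i j => w (min i j), fun i j => by simp [min_comm]⟩

lemma pathGraph_edge_form {k : ℕ} {e : Sym2 (Fin k)}
    (he : e ∈ (SimpleGraph.pathGraph k).edgeSet) :
    ∃ i j : Fin k, e = s(i, j) ∧ (i : ℕ) + 1 = (j : ℕ) := by
  induction e using Sym2.inductionOn with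
  | hf a b =>
    rw [SimpleGraph.mem_edgeSet, SimpleGraph.pathGraph_adj] at he
    rcases he with h | h
    · exact ⟨a, b, rfl, h⟩
    · exact ⟨b, a, Sym2.eq_swap, h⟩

/-- The edge-ordered path on `k` vertices whose edge labels, listed along the path,
are `w 0, w 1, …, w (k-2)`. -/
def pathEO (k : ℕ) (w : Fin k → ℝ) (hw : Function.Injective w) : EOGraph (Fin k) where
  graph := SimpleGraph.pathGraph k
  label := pathLabel w
  inj := by
    intro e he f hf hef
    obtain ⟨i, j, rfl, hij⟩ := pathGraph_edge_form he
    obtain ⟨i', j', rfl, hij'⟩ := pathGraph_edge_form hf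
    have h1 : min i j = i := min_eq_left (Fin.le_def.mpr (by omega))
    have h2 : min i' j' = i' := min_eq_left (Fin.le_def.mpr (by omega))
    simp only [pathLabel, Sym2.lift_mk] at hef
    rw [h1, h2] at hef
    have hii : i = i' := hw hef
    have hjj : j = j' := Fin.ext (by omega)
    rw [hii, hjj]

/-- The edge-ordered path with natural-number labels. -/
def pathEON (k : ℕ) (v : Fin k → ℕ) (hv : Function.Injective v) : EOGraph (Fin k) :=
  pathEO k (fun i => (v i : ℝ)) (fun a b h => hv (Nat.cast_injective h))

/-- The bipartition of the edge-ordered path `pathEON k v hv`; the starting vertex is a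
right vertex iff `startRight` holds (right = `true`, left = `false`). -/
def pathEOBig (k : ℕ) (v : Fin k → ℕ) (hv : Function.Injective v) (startRight : Bool) :
    EOBigraph (Fin k) where
  toEOGraph := pathEON k v hv
  side := fun i => if i.val % 2 = 0 then startRight else !startRight
  proper := by
    intro a b hab
    have h : (SimpleGraph.pathGraph k).Adj a b := hab
    rw [SimpleGraph.pathGraph_adj] at h
    have hpar : (a.val % 2 = 0) ↔ ¬ (b.val % 2 = 0) := by omega
    by_cases ha : a.val % 2 = 0 <;> by_cases hb : b.val % 2 = 0 <;>
      simp_all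

def P4_213 : EOGraph (Fin 4) := pathEON 4 ![2,1,3,0] (by decide)
def P5_1342 : EOGraph (Fin 5) := pathEON 5 ![1,3,4,2,0] (by decide)
def P5_1432 : EOGraph (Fin 5) := pathEON 5 ![1,4,3,2,0] (by decide)
def P6_13254 : EOGraph (Fin 6) := pathEON 6 ![1,3,2,5,4,0] (by decide)
def P6_21354 : EOGraph (Fin 6) := pathEON 6 ![2,1,3,5,4,0] (by decide)
def P6plus_13254 : EOBigraph (Fin 6) := pathEOBig 6 ![1,3,2,5,4,0] (by decide) true
def P6minus_13254 : EOBigraph (Fin 6) := pathEOBig 6 ![1,3,2,5,4,0] (by decide) false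
def P5plus_2143 : EOBigraph (Fin 5) := pathEOBig 5 ![2,1,4,3,0] (by decide) true
def P5minus_2143 : EOBigraph (Fin 5) := pathEOBig 5 ![2,1,4,3,0] (by decide) false

/-- `B'` is an extension of `B`: it is obtained by adding new edges, each connecting an end
of the smallest edge `s(x,y)` of `B` to a new degree-1 vertex, all new edges being smaller
than `s(x,y)`, and all new edges at the left end being smaller than those at the right end. -/
def IsExtensionOf {V' V : Type} [Fintype V'] [Fintype V]
    (B' : EOBigraph V') (B : EOBigraph V) : Prop :=
  ∃ (ι : V → V') (x y : V),
    Function.Injective ι ∧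
    B.toEOGraph.graph.Adj x y ∧ B.side x = false ∧ B.side y = true ∧
    (∀ e ∈ B.toEOGraph.graph.edgeSet, B.toEOGraph.label s(x, y) ≤ B.toEOGraph.label e) ∧
    (∀ a b, B.toEOGraph.graph.Adj a b ↔ B'.toEOGraph.graph.Adj (ι a) (ι b)) ∧
    (∀ a, B'.side (ι a) = B.side a) ∧
    (∀ e ∈ B.toEOGraph.graph.edgeSet, ∀ f ∈ B.toEOGraph.graph.edgeSet,
      (B.toEOGraph.label e < B.toEOGraph.label f ↔
        B'.toEOGraph.label (Sym2.map ι e) < B'.toEOGraph.label (Sym2.map ι f))) ∧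
    (∀ w : V', w ∉ Set.range ι →
      (∃! u, B'.toEOGraph.graph.Adj w u) ∧
      (∀ u, B'.toEOGraph.graph.Adj w u → (u = ι x ∨ u = ι y) ∧
        B'.toEOGraph.label s(w, u) < B'.toEOGraph.label s(ι x, ι y))) ∧
    (∀ w w' : V', w ∉ Set.range ι → w' ∉ Set.range ι →
      B'.toEOGraph.graph.Adj w (ι x) → B'.toEOGraph.graph.Adj w' (ι y) →
      B'.toEOGraph.label s(w, ι x) < B'.toEOGraph.label s(w', ι y))

/-- A bundled edge-ordered bigraph (on some `Fin n`). -/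
structure BundledBigraph where
  n : ℕ
  big : EOBigraph (Fin n)

/-- `B` is (isomorphic to) `T₀`, the edge-ordered bigraph with one edge and two vertices. -/
def IsT0 {V : Type} [Fintype V] (B : EOBigraph V) : Prop :=
  Fintype.card V = 2 ∧ ∀ u v : V, u ≠ v → B.toEOGraph.graph.Adj u v

/-- `B` can be obtained (up to isomorphism) from `T₀` by a sequence of `i` extensions. -/
def ReachedInSteps {V : Type} [Fintype V] (i : ℕ) (B : EOBigraph V) : Prop :=
  ∃ f : ℕ → BundledBigraph, IsT0 (f 0).big ∧ BIsoTo (f i).big B ∧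
    ∀ j < i, IsExtensionOf (f (j+1)).big (f j).big

/-- The recursive depth of a right caterpillar: the minimum number of extension steps
needed to obtain it from `T₀`. -/
def HasRecursiveDepth {V : Type} [Fintype V] (B : EOBigraph V) (i : ℕ) : Prop :=
  ReachedInSteps i B ∧ ∀ j < i, ¬ ReachedInSteps j B

/-- An edge `e` (with left end `x` and right end `y`) is `c`-left-leaning: there are `c` edges
at `x` and `c` edges at `y` with every edge of the latter set larger than every edge of the
former, but smaller than `e`. -/
def LeftLeaning {V : Type} [Fintype V] (c : ℕ) (G : EOBigraph V) (e : Sym2 V) : Prop :=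
  ∃ x y : V, e = s(x, y) ∧ e ∈ G.toEOGraph.graph.edgeSet ∧
    G.side x = false ∧ G.side y = true ∧
    ∃ S S' : Finset (Sym2 V), S.card = c ∧ S'.card = c ∧
      (∀ f ∈ S, f ∈ G.toEOGraph.graph.edgeSet ∧ x ∈ f) ∧
      (∀ f ∈ S', f ∈ G.toEOGraph.graph.edgeSet ∧ y ∈ f) ∧
      (∀ f ∈ S, ∀ f' ∈ S', G.toEOGraph.label f < G.toEOGraph.label f') ∧
      (∀ f' ∈ S', G.toEOGraph.label f' < G.toEOGraph.label e)

/-- An edge `e` (with left end `x` and right end `y`) is `c`-right-leaning. -/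
def RightLeaning {V : Type} [Fintype V] (c : ℕ) (G : EOBigraph V) (e : Sym2 V) : Prop :=
  ∃ x y : V, e = s(x, y) ∧ e ∈ G.toEOGraph.graph.edgeSet ∧
    G.side x = false ∧ G.side y = true ∧
    ∃ S S' : Finset (Sym2 V), S.card = c ∧ S'.card = c ∧
      (∀ f ∈ S, f ∈ G.toEOGraph.graph.edgeSet ∧ x ∈ f) ∧
      (∀ f ∈ S', f ∈ G.toEOGraph.graph.edgeSet ∧ y ∈ f) ∧
      (∀ f' ∈ S', ∀ f ∈ S, G.toEOGraph.label f' < G.toEOGraph.label f) ∧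
      (∀ f ∈ S, G.toEOGraph.label f < G.toEOGraph.label e)

/-- The spanning sub-bigraph of `G` consisting of the edges satisfying `P`. -/
def bigraphRestrict {V : Type} [Fintype V] (G : EOBigraph V) (P : Sym2 V → Prop) :
    EOBigraph V where
  toEOGraph :=
    { graph := SimpleGraph.fromEdgeSet {e | e ∈ G.toEOGraph.graph.edgeSet ∧ P e}
      label := G.toEOGraph.label
      inj := by
        intro e he f hf h
        rw [SimpleGraph.edgeSet_fromEdgeSet] at he hf
        exact G.toEOGraph.inj e he.1.1 f hf.1.1 h }
  side := G.side
  proper := by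
    intro u v huv
    rw [SimpleGraph.fromEdgeSet_adj] at huv
    have h1 : s(u, v) ∈ G.toEOGraph.graph.edgeSet := huv.1.1
    exact G.proper u v ((SimpleGraph.mem_edgeSet _).mp h1)

/-- The spanning subgraph of the `c`-left-leaning edges. -/
def leftSub {V : Type} [Fintype V] (c : ℕ) (G : EOBigraph V) : EOBigraph V :=
  bigraphRestrict G (LeftLeaning c G)

/-- The spanning subgraph of the `c`-right-leaning edges. -/
def rightSub {V : Type} [Fintype V] (c : ℕ) (G : EOBigraph V) : EOBigraph V :=
  bigraphRestrict G (RightLeaning c G)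

/-- `G^{c-left}_i`: iteratively keep only `c`-left-leaning edges, `i` times. -/
def leftIter {V : Type} [Fintype V] (c i : ℕ) (G : EOBigraph V) : EOBigraph V :=
  (leftSub c)^[i] G

/-- `G^{c-right}_i`: iteratively keep only `c`-right-leaning edges, `i` times. -/
def rightIter {V : Type} [Fintype V] (c i : ℕ) (G : EOBigraph V) : EOBigraph V :=
  (rightSub c)^[i] G

/-- The set of labels of edges incident to `v`. -/
def incidentLabels {V : Type} [Fintype V] (G : EOGraph V) (v : V) : Set ℝ :=
  G.label '' {e | e ∈ G.graph.edgeSet ∧ v ∈ e}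

/-- The vertex label `l(v)`: the second smallest label among the edges incident to `v`
(meaningful when `v` has degree at least 2). -/
noncomputable def secondLabel {V : Type} [Fintype V] (G : EOGraph V) (v : V) : ℝ :=
  sInf (incidentLabels G v \ {sInf (incidentLabels G v)})

/-- `v` has degree at least 2. -/
def DegTwo {V : Type} [Fintype V] (G : EOGraph V) (v : V) : Prop :=
  2 ≤ {e | e ∈ G.graph.edgeSet ∧ v ∈ e}.ncard

/-- An edge `xy` (left end `x`, right end `y`) is left inclined if `l(x) < l(y) ≤ L(xy)`. -/
def LeftInclined {V : Type} [Fintype V] (G : EOBigraph V) (e : Sym2 V) : Prop :=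
  ∃ x y : V, e = s(x, y) ∧ e ∈ G.toEOGraph.graph.edgeSet ∧
    G.side x = false ∧ G.side y = true ∧
    DegTwo G.toEOGraph x ∧ DegTwo G.toEOGraph y ∧
    secondLabel G.toEOGraph x < secondLabel G.toEOGraph y ∧
    secondLabel G.toEOGraph y ≤ G.toEOGraph.label e

/-- An edge `xy` (left end `x`, right end `y`) is right inclined if `l(y) < l(x) ≤ L(xy)`. -/
def RightInclined {V : Type} [Fintype V] (G : EOBigraph V) (e : Sym2 V) : Prop :=
  ∃ x y : V, e = s(x, y) ∧ e ∈ G.toEOGraph.graph.edgeSet ∧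
    G.side x = false ∧ G.side y = true ∧
    DegTwo G.toEOGraph x ∧ DegTwo G.toEOGraph y ∧
    secondLabel G.toEOGraph y < secondLabel G.toEOGraph x ∧
    secondLabel G.toEOGraph x ≤ G.toEOGraph.label e

/-- `G_l`: the spanning sub-bigraph of the left inclined edges of `G`. -/
def inclinedLeftSub {V : Type} [Fintype V] (G : EOBigraph V) : EOBigraph V :=
  bigraphRestrict G (LeftInclined G)

/-- `G_r`: the spanning sub-bigraph of the right inclined edges of `G`. -/
def inclinedRightSub {V : Type} [Fintype V] (G : EOBigraph V) : EOBigraph V :=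
  bigraphRestrict G (RightInclined G)

/-- The underlying simple graph of `P` is a path. -/
def IsPathEO {V : Type} [Fintype V] (P : EOGraph V) : Prop :=
  ∃ (k : ℕ) (f : V ≃ Fin k), ∀ a b, P.graph.Adj a b ↔ (SimpleGraph.pathGraph k).Adj (f a) (f b)

/-- A monotone path: the labels increase (or decrease) monotonically along the path. -/
def IsMonotonePath {V : Type} [Fintype V] (P : EOGraph V) : Prop :=
  ∃ (k : ℕ) (w : Fin k → ℝ) (hw : Function.Injective w),
    (StrictMono w ∨ StrictAnti w) ∧ EOIsoTo (pathEO k w hw) P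

/-- A flipped path: obtained from a monotone path (with at least 3 edges) by swapping
either the two smallest or the two largest labels. -/
def IsFlippedPath {V : Type} [Fintype V] (P : EOGraph V) : Prop :=
  ∃ (k : ℕ) (hk : 4 ≤ k) (w : Fin k → ℝ) (hw : StrictMono w),
    EOIsoTo (pathEO k (w ∘ (Equiv.swap (⟨0, by omega⟩ : Fin k) ⟨1, by omega⟩))
      (hw.injective.comp (Equiv.injective _))) P ∨
    EOIsoTo (pathEO k (w ∘ (Equiv.swap (⟨k-3, by omega⟩ : Fin k) ⟨k-2, by omega⟩))
      (hw.injective.comp (Equiv.injective _))) P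

/-- 0-1 matrix containment: `A` contains `B` if `B` can be obtained from a submatrix of `A`
by possibly changing some 1 entries to 0. -/
def MContains {m n p q : ℕ} (A : Fin m → Fin n → Bool) (B : Fin p → Fin q → Bool) : Prop :=
  ∃ (r : Fin p → Fin m) (c : Fin q → Fin n), StrictMono r ∧ StrictMono c ∧
    ∀ i j, B i j = true → A (r i) (c j) = true

/-- The extremal function of a 0-1 matrix `B`: the maximum number of 1 entries in an
`n × n` 0-1 matrix avoiding `B`. -/
noncomputable def mex {p q : ℕ} (n : ℕ) (B : Fin p → Fin q → Bool) : ℕ :=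
  sSup {k | ∃ A : Fin n → Fin n → Bool, ¬ MContains A B ∧
    k = (Finset.univ.filter fun ij : Fin n × Fin n => A ij.1 ij.2 = true).card}

/-- The staircase with positions `p 0, …, p t` describes the matrix `A`. -/
def DescribedBy {nr nc : ℕ} (A : Fin nr → Fin nc → Bool) (t : ℕ)
    (p : Fin (t + 1) → Fin nr × Fin nc) : Prop :=
  (∀ k : Fin t,
      ((p k.succ).1.val = (p k.castSucc).1.val + 1 ∧ (p k.succ).2 = (p k.castSucc).2) ∨
      ((p k.succ).1 = (p k.castSucc).1 ∧ (p k.succ).2.val = (p k.castSucc).2.val + 1)) ∧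
  ∀ i j, A i j = true ↔
    ((∃ k, p k = (i, j)) ∨
     (i = (p 0).1 ∧ j < (p 0).2) ∨ (j = (p 0).2 ∧ i < (p 0).1) ∨
     (i = (p (Fin.last t)).1 ∧ (p (Fin.last t)).2 < j) ∨
     (j = (p (Fin.last t)).2 ∧ (p (Fin.last t)).1 < i))

/-- A staircase matrix: `A`, or `A` with the order of its columns reversed, is described
by a staircase. -/
def IsStaircaseMatrix {nr nc : ℕ} (A : Fin nr → Fin nc → Bool) : Prop :=
  (∃ t p, DescribedBy A t p) ∨ (∃ t p, DescribedBy (fun i j => A i j.rev) t p)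

/-- The bipartite graph whose bipartite adjacency matrix is `A`. -/
def MatrixGraph {nr nc : ℕ} (A : Fin nr → Fin nc → Bool) : SimpleGraph (Fin nr ⊕ Fin nc) :=
  SimpleGraph.fromRel fun u v =>
    match u, v with
    | .inl i, .inr j => A i j = true
    | _, _ => False

/-- A connected 0-1 matrix: the bipartite adjacency matrix of a connected graph. -/
def IsConnectedMatrix {nr nc : ℕ} (A : Fin nr → Fin nc → Bool) : Prop :=
  (MatrixGraph A).Connected

/-!
The proof uses the one-entry extension technique of Füredi–Hajnal and Tardos. Suppose `B'`
arises from a `p × q` pattern `B` by adding a `1` in a column to the right of all `1` entries of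
`B`, in a row that has a `1` in the last nonempty column of `B`. Erasing the last `q` ones of every
row of a `B'`-free `n × n` matrix erases at most `q n` ones and leaves a `B`-free matrix: in an
occurrence of `B` in the trimmed matrix, the image of that `1` of `B` still has `q` ones of the
original matrix to its right, and these host the new column. Hence `ex(n, B') ≤ ex(n, B) + q n`,
and by symmetry the same holds in the other three directions. A single entry has linear extremal
function, and a staircase matrix is grown from the first position of its staircase: first its
upward and leftward tails, then the staircase itself (each step goes beyond all entries placed so
far, anchored at the current corner), and finally its rightward and downward tails.
-/

open Finset Matrix

theorem Finset.card_filter_card_gt_lt_le {α : Type*} [LinearOrder α] (T : Finset α)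
    (k : ℕ) : #{x ∈ T | #{y ∈ T | x < y} < k} ≤ k := by
  have hanti : ∀ x ∈ T, ∀ y ∈ T, x < y → #{z ∈ T | y < z} < #{z ∈ T | x < z} := by
    intro x _ y hy hxy
    refine card_lt_card ((ssubset_iff_of_subset ?_).2 ⟨y, by simp [hy, hxy], by simp⟩)
    intro z hz
    simp only [mem_filter] at hz ⊢
    exact ⟨hz.1, hxy.trans hz.2⟩
  calc _ ≤ #(range k) := by
        refine card_le_card_of_injOn (fun x => #{y ∈ T | x < y}) (fun x hx => ?_) ?_
        · simpa using (mem_filter.1 hx).2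
        · intro x hx y hy hxy
          have hx := (mem_filter.1 hx).1
          have hy := (mem_filter.1 hy).1
          rcases lt_trichotomy x y with h | h | h
          · exact absurd hxy (hanti x hx y hy h).ne'
          · exact h
          · exact absurd hxy (hanti y hy x hx h).ne
    _ = k := card_range k

theorem exists_strictMono_extend_of_le_card {α : Type*} [LinearOrder α] {k : ℕ}
    {c : Fin k → α} (hc : StrictMono c) (j₁ : Fin k) {T : Finset α} (hT : k ≤ #T)
    (hgt : ∀ x ∈ T, c j₁ < x) :
    ∃ c' : Fin k → α, StrictMono c' ∧ (∀ j ≤ j₁, c' j = c j) ∧ ∀ j, j₁ < j → c' j ∈ T := by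
  let e := T.orderEmbOfFin rfl
  refine ⟨fun j => if j ≤ j₁ then c j else e (Fin.castLE hT j), ?_, fun j hj => if_pos hj,
    fun j hj => by dsimp only; rw [if_neg (not_le.2 hj)]; exact T.orderEmbOfFin_mem rfl _⟩
  intro a b hab
  dsimp only
  split_ifs with ha hb hb
  · exact hc hab
  · exact (hc.monotone ha).trans_lt (hgt _ (T.orderEmbOfFin_mem rfl _))
  · exact absurd (hab.le.trans hb) ha
  · exact e.strictMono (Fin.strictMono_castLE hT hab)

section ExtremalFunction

variable {p q n : ℕ}

def numOnes {m k : ℕ} (M : Fin m → Fin k → Bool) : ℕ := #{x : Fin m × Fin k | M x.1 x.2}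

theorem numOnes_eq_sum {m k : ℕ} (M : Fin m → Fin k → Bool) :
    numOnes M = ∑ a, #{b | M a b} := by
  simp only [numOnes, card_filter, Fintype.sum_prod_type]

theorem mex_le_of_forall {B : Fin p → Fin q → Bool} {m : ℕ}
    (h : ∀ M : Fin n → Fin n → Bool, ¬ MContains M B → numOnes M ≤ m) : mex n B ≤ m :=
  csSup_le' <| by rintro _ ⟨M, hM, rfl⟩; exact h M hM

theorem numOnes_le_mex {B : Fin p → Fin q → Bool} {M : Fin n → Fin n → Bool}
    (hM : ¬ MContains M B) : numOnes M ≤ mex n B :=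
  le_csSup ⟨n * n, by rintro _ ⟨M', -, rfl⟩; simpa using card_le_univ (α := Fin n × Fin n) _⟩
    ⟨M, hM, rfl⟩

theorem mex_le_mex_add {B B' : Fin p → Fin q → Bool} {d : ℕ}
    (h : ∀ M : Fin n → Fin n → Bool, ¬ MContains M B' →
      ∃ M' : Fin n → Fin n → Bool, ¬ MContains M' B ∧ numOnes M ≤ numOnes M' + d) :
    mex n B' ≤ mex n B + d :=
  mex_le_of_forall fun M hM =>
    let ⟨_, hM', hle⟩ := h M hM
    hle.trans (Nat.add_le_add_right (numOnes_le_mex hM') d)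

theorem mex_congr {p' q' : ℕ} {B : Fin p → Fin q → Bool} {B' : Fin p' → Fin q' → Bool}
    (e : (Fin n → Fin n → Bool) ≃ (Fin n → Fin n → Bool))
    (hones : ∀ M, numOnes (e M) = numOnes M)
    (hcont : ∀ M, MContains (e M) B' ↔ MContains M B) :
    mex n B' = mex n B := by
  unfold mex
  congr 1
  ext k
  constructor
  · rintro ⟨M, hM, rfl⟩
    refine ⟨e.symm M, fun h => hM ?_, ?_⟩
    · simpa using (hcont (e.symm M)).2 h
    · have h := hones (e.symm M)
      rw [Equiv.apply_symm_apply] at h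
      exact h
  · rintro ⟨M, hM, rfl⟩
    exact ⟨e M, fun h => hM ((hcont M).1 h), (hones M).symm⟩

theorem mContains_transpose_iff {m k : ℕ} {M : Fin m → Fin k → Bool} {B : Fin p → Fin q → Bool} :
    MContains Mᵀ Bᵀ ↔ MContains M B :=
  ⟨fun ⟨r, c, hr, hc, h⟩ => ⟨c, r, hc, hr, fun i j hij => h j i hij⟩,
    fun ⟨r, c, hr, hc, h⟩ => ⟨c, r, hc, hr, fun j i hij => h i j hij⟩⟩

theorem mex_transpose (B : Fin p → Fin q → Bool) : mex n Bᵀ = mex n B :=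
  mex_congr ⟨transpose, transpose, fun _ => rfl, fun _ => rfl⟩
    (fun M => card_equiv (Equiv.prodComm _ _) fun _ => by
      simp only [mem_filter, mem_univ, true_and]; rfl)
    (fun _ => mContains_transpose_iff)

def revCols (B : Fin p → Fin q → Bool) : Fin p → Fin q → Bool := fun i j => B i j.rev

@[simp]
theorem revCols_revCols (B : Fin p → Fin q → Bool) : revCols (revCols B) = B := by
  funext i j
  simp [revCols]

theorem MContains.revCols {m k : ℕ} {M : Fin m → Fin k → Bool} {B : Fin p → Fin q → Bool}
    (h : MContains M B) : MContains (revCols M) (revCols B) := by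
  obtain ⟨r, c, hr, hc, h⟩ := h
  exact ⟨r, fun j => (c j.rev).rev, hr, fun a b hab => Fin.rev_lt_rev.2 (hc (Fin.rev_lt_rev.2 hab)),
    fun i j hij => by simpa [_root_.revCols] using h i j.rev hij⟩

theorem mex_revCols (B : Fin p → Fin q → Bool) : mex n (revCols B) = mex n B :=
  mex_congr ⟨revCols, revCols, revCols_revCols, revCols_revCols⟩
    (fun M => card_equiv ((Equiv.refl _).prodCongr Fin.revPerm) fun _ => by
      simp only [mem_filter, mem_univ, true_and]; rfl)
    (fun M => ⟨fun h => by simpa using h.revCols, MContains.revCols⟩)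

section Extension

variable {m k : ℕ}

def rowOnes (M : Fin m → Fin k → Bool) (a : Fin m) : Finset (Fin k) := {b | M a b}

def eraseLastOnes (M : Fin m → Fin k → Bool) (d : ℕ) : Fin m → Fin k → Bool :=
  fun a b => M a b && decide (d ≤ #{b' ∈ rowOnes M a | b < b'})

theorem numOnes_le_numOnes_eraseLastOnes_add (M : Fin m → Fin k → Bool) (d : ℕ) :
    numOnes M ≤ numOnes (eraseLastOnes M d) + m * d := by
  have hrow : ∀ a, #(rowOnes M a) ≤ #(rowOnes (eraseLastOnes M d) a) + d := by
    intro a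
    calc #(rowOnes M a)
        ≤ #(rowOnes (eraseLastOnes M d) a ∪
            {b ∈ rowOnes M a | #{b' ∈ rowOnes M a | b < b'} < d}) := by
          refine card_le_card fun b hb => ?_
          by_cases hd : d ≤ #{b' ∈ rowOnes M a | b < b'}
          · refine mem_union_left _ (mem_filter.2 ⟨mem_univ _, ?_⟩)
            simp_all [rowOnes, eraseLastOnes]
          · exact mem_union_right _ (mem_filter.2 ⟨hb, not_le.1 hd⟩)
      _ ≤ _ := (card_union_le _ _).trans (Nat.add_le_add_left
          ((rowOnes M a).card_filter_card_gt_lt_le d) _)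
  simp only [numOnes_eq_sum]
  calc ∑ a, #{b | M a b} ≤ ∑ a, (#{b | eraseLastOnes M d a b} + d) := sum_le_sum fun a _ => hrow a
    _ = _ := by simp [sum_add_distrib]

end Extension

theorem mex_le_mex_add_of_extend_right {B B' : Fin p → Fin q → Bool} {i₀ : Fin p}
    {j₁ j₀ : Fin q} (hj : j₁ < j₀) (hanchor : B i₀ j₁) (hcols : ∀ i j, B i j → j ≤ j₁)
    (hB' : ∀ i j, B' i j → B i j ∨ (i = i₀ ∧ j = j₀)) :
    mex n B' ≤ mex n B + q * n := by
  refine mex_le_mex_add fun M hM => ⟨eraseLastOnes M q, ?_, ?_⟩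
  · rintro ⟨r, c, hr, hc, hrc⟩
    have htail := hrc i₀ j₁ hanchor
    simp only [eraseLastOnes, Bool.and_eq_true, decide_eq_true_eq] at htail
    obtain ⟨c', hc', hc'c, hc'T⟩ := exists_strictMono_extend_of_le_card hc j₁ htail.2
      fun x hx => (mem_filter.1 hx).2
    refine hM ⟨r, c', hr, hc', fun i j hij => ?_⟩
    rcases hB' i j hij with hB | ⟨rfl, rfl⟩
    · rw [hc'c j (hcols i j hB)]
      have hij := hrc i j hB
      simp only [eraseLastOnes, Bool.and_eq_true] at hij
      exact hij.1
    · simpa [rowOnes] using (mem_filter.1 (hc'T _ hj)).1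
  · simpa [mul_comm] using numOnes_le_numOnes_eraseLastOnes_add M q

def HasLinearEx (B : Fin p → Fin q → Bool) : Prop := ∃ C : ℕ, ∀ n, mex n B ≤ C * n

theorem hasLinearEx_transpose_iff {B : Fin p → Fin q → Bool} : HasLinearEx Bᵀ ↔ HasLinearEx B := by
  simp only [HasLinearEx, mex_transpose]

theorem hasLinearEx_revCols_iff {B : Fin p → Fin q → Bool} :
    HasLinearEx (revCols B) ↔ HasLinearEx B := by
  simp only [HasLinearEx, mex_revCols]

namespace HasLinearEx

variable {B B' : Fin p → Fin q → Bool}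

theorem extend_right (h : HasLinearEx B) {i₀ : Fin p} {j₁ j₀ : Fin q} (hj : j₁ < j₀)
    (hanchor : B i₀ j₁) (hcols : ∀ i j, B i j → j ≤ j₁)
    (hB' : ∀ i j, B' i j → B i j ∨ (i = i₀ ∧ j = j₀)) : HasLinearEx B' := by
  obtain ⟨C, hC⟩ := h
  refine ⟨C + q, fun n => (mex_le_mex_add_of_extend_right hj hanchor hcols hB').trans ?_⟩
  rw [add_mul]
  exact Nat.add_le_add_right (hC n) _

theorem extend_left (h : HasLinearEx B) {i₀ : Fin p} {j₁ j₀ : Fin q} (hj : j₀ < j₁)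
    (hanchor : B i₀ j₁) (hcols : ∀ i j, B i j → j₁ ≤ j)
    (hB' : ∀ i j, B' i j → B i j ∨ (i = i₀ ∧ j = j₀)) : HasLinearEx B' := by
  rw [← hasLinearEx_revCols_iff] at h ⊢
  refine h.extend_right (i₀ := i₀) (Fin.rev_lt_rev.2 hj) (by simpa [revCols]) (fun i j hij => ?_)
    (fun i j hij => ?_)
  · simpa using Fin.rev_le_rev.2 (hcols i j.rev hij)
  · simpa [revCols, Fin.rev_eq_iff] using hB' i j.rev hij

theorem extend_down (h : HasLinearEx B) {i₁ i₀ : Fin p} {j₀ : Fin q} (hi : i₁ < i₀)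
    (hanchor : B i₁ j₀) (hrows : ∀ i j, B i j → i ≤ i₁)
    (hB' : ∀ i j, B' i j → B i j ∨ (i = i₀ ∧ j = j₀)) : HasLinearEx B' := by
  rw [← hasLinearEx_transpose_iff] at h ⊢
  exact h.extend_right hi hanchor (fun j i hij => hrows i j hij)
    (fun j i hij => (hB' i j hij).imp id And.symm)

theorem extend_up (h : HasLinearEx B) {i₁ i₀ : Fin p} {j₀ : Fin q} (hi : i₀ < i₁)
    (hanchor : B i₁ j₀) (hrows : ∀ i j, B i j → i₁ ≤ i)
    (hB' : ∀ i j, B' i j → B i j ∨ (i = i₀ ∧ j = j₀)) : HasLinearEx B' := by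
  rw [← hasLinearEx_transpose_iff] at h ⊢
  exact h.extend_left hi hanchor (fun j i hij => hrows i j hij)
    (fun j i hij => (hB' i j hij).imp id And.symm)

end HasLinearEx

theorem card_filter_not_exists_strictMono_apply_eq_le (i : Fin p) :
    #{a : Fin n | ¬ ∃ r : Fin p → Fin n, StrictMono r ∧ r i = a} ≤ p := by
  have hbad : ∀ a ∈ ({a : Fin n | ¬ ∃ r : Fin p → Fin n, StrictMono r ∧ r i = a} : Finset _),
      a.val < i.val ∨ n + i.val < a.val + p := by
    intro a ha
    by_contra hgood
    push Not at hgood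
    refine (mem_filter.1 ha).2 ⟨fun x => ⟨a - i + x, by omega⟩, fun x y hxy => ?_, Fin.ext ?_⟩
    · simp only [Fin.mk_lt_mk]
      have := Fin.lt_def.1 hxy
      omega
    · simp only
      omega
  calc _ ≤ #(range p) := by
        refine card_le_card_of_injOn (fun a => if a.val < i.val then a.val else a.val + p - n)
          (fun a ha => ?_) (fun a ha b hb hab => ?_)
        · have := hbad a ha
          simp only [coe_range, Set.mem_Iio]
          split_ifs <;> omega
        · have ha := hbad a ha
          have hb := hbad b hb
          simp only at hab
          apply Fin.ext
          split_ifs at hab <;> omega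
    _ = p := card_range p

theorem mex_le_of_subsingleton_ones {B : Fin p → Fin q → Bool} (i₀ : Fin p) (j₀ : Fin q)
    (hB : ∀ i j, B i j → i = i₀ ∧ j = j₀) : mex n B ≤ (p + q) * n := by
  refine mex_le_of_forall fun M hM => ?_
  set R : Finset (Fin n) := {a | ¬ ∃ r : Fin p → Fin n, StrictMono r ∧ r i₀ = a}
  set K : Finset (Fin n) := {b | ¬ ∃ c : Fin q → Fin n, StrictMono c ∧ c j₀ = b}
  have hsub : ({x | M x.1 x.2} : Finset (Fin n × Fin n)) ⊆ R ×ˢ univ ∪ univ ×ˢ K := by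
    rintro ⟨a, b⟩ hab
    by_contra hout
    simp only [mem_union, mem_product, mem_univ, and_true, true_and, R, K, mem_filter,
      not_or, not_not] at hout
    obtain ⟨⟨r, hr, rfl⟩, ⟨c, hc, rfl⟩⟩ := hout
    refine hM ⟨r, c, hr, hc, fun i j hij => ?_⟩
    obtain ⟨rfl, rfl⟩ := hB i j hij
    simpa using hab
  calc numOnes M ≤ #(R ×ˢ univ) + #(univ ×ˢ K) := (card_le_card hsub).trans (card_union_le _ _)
    _ ≤ p * n + n * q := by
      simp only [card_product, card_univ, Fintype.card_fin]
      exact Nat.add_le_add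
        (Nat.mul_le_mul_right _ (card_filter_not_exists_strictMono_apply_eq_le i₀))
        (Nat.mul_le_mul_left _ (card_filter_not_exists_strictMono_apply_eq_le j₀))
    _ = (p + q) * n := by ring

section Pattern

variable {S : Finset (Fin p × Fin q)} {c : Fin p × Fin q}

def pattern (S : Finset (Fin p × Fin q)) : Fin p → Fin q → Bool := fun i j => (i, j) ∈ S

@[simp]
theorem pattern_eq_true {i : Fin p} {j : Fin q} : pattern S i j ↔ (i, j) ∈ S :=
  decide_eq_true_iff

theorem pattern_insert_eq_true {x : Fin p × Fin q} {i : Fin p} {j : Fin q}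
    (h : pattern (insert x S) i j) : pattern S i j ∨ (i = x.1 ∧ j = x.2) := by
  simp only [pattern_eq_true, mem_insert, Prod.ext_iff] at h ⊢
  exact h.symm

theorem hasLinearEx_pattern_singleton (c : Fin p × Fin q) : HasLinearEx (pattern {c}) :=
  ⟨p + q, fun _ => mex_le_of_subsingleton_ones c.1 c.2 fun i j h => by
    simpa [Prod.ext_iff] using h⟩

def rightRay (c : Fin p × Fin q) : Finset (Fin p × Fin q) := {y | y.1 = c.1 ∧ c.2 < y.2}
def leftRay (c : Fin p × Fin q) : Finset (Fin p × Fin q) := {y | y.1 = c.1 ∧ y.2 < c.2}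
def downRay (c : Fin p × Fin q) : Finset (Fin p × Fin q) := {y | y.2 = c.2 ∧ c.1 < y.1}
def upRay (c : Fin p × Fin q) : Finset (Fin p × Fin q) := {y | y.2 = c.2 ∧ y.1 < c.1}

def IsMonotoneRookPath {t : ℕ} (w : Fin (t + 1) → Fin p × Fin q) : Prop :=
  ∀ k : Fin t, w k.castSucc ≤ w k.succ ∧
    ((w k.succ).1 = (w k.castSucc).1 ∨ (w k.succ).2 = (w k.castSucc).2)

end Pattern

namespace HasLinearEx

theorem union_rightRay (S : Finset (Fin p × Fin q)) (c : Fin p × Fin q)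
    (h : HasLinearEx (pattern S)) (hc : c ∈ S) (hcols : ∀ y ∈ S, y.2 ≤ c.2) :
    HasLinearEx (pattern (S ∪ rightRay c)) := by
  by_cases hnext : c.2.val + 1 < q
  · obtain ⟨x, hx1, hx2⟩ : ∃ x : Fin p × Fin q, x.1 = c.1 ∧ x.2.val = c.2.val + 1 :=
      ⟨(c.1, ⟨c.2 + 1, hnext⟩), rfl, rfl⟩
    have hcx : c.2 < x.2 := Fin.lt_def.2 (by omega)
    have hray : rightRay c = insert x (rightRay x) := by
      ext ⟨i, j⟩
      simp only [rightRay, mem_insert, mem_filter, mem_univ, true_and, Prod.ext_iff, Fin.lt_def,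
        Fin.ext_iff, hx1]
      omega
    rw [hray, union_insert, ← insert_union]
    refine union_rightRay _ x (h.extend_right hcx (by simpa [hx1] using hc)
      (fun i j hij => hcols _ (by simpa using hij)) fun i j => pattern_insert_eq_true)
      (mem_insert_self x S) (forall_mem_insert _ _ _ |>.2 ⟨le_rfl, fun y hy => ?_⟩)
    exact (hcols y hy).trans hcx.le
  · have hray : rightRay c = ∅ := by
      ext ⟨i, j⟩
      have := j.isLt
      simp only [rightRay, mem_filter, mem_univ, true_and, Fin.lt_def, notMem_empty, iff_false]
      omega
    rwa [hray, union_empty]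
termination_by q - c.2.val

theorem union_leftRay (S : Finset (Fin p × Fin q)) (c : Fin p × Fin q)
    (h : HasLinearEx (pattern S)) (hc : c ∈ S) (hcols : ∀ y ∈ S, c.2 ≤ y.2) :
    HasLinearEx (pattern (S ∪ leftRay c)) := by
  by_cases hnext : 0 < c.2.val
  · obtain ⟨x, hx1, hx2⟩ : ∃ x : Fin p × Fin q, x.1 = c.1 ∧ x.2.val + 1 = c.2.val :=
      ⟨(c.1, ⟨c.2 - 1, by omega⟩), rfl, by simp only; omega⟩
    have hxc : x.2 < c.2 := Fin.lt_def.2 (by omega)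
    have hray : leftRay c = insert x (leftRay x) := by
      ext ⟨i, j⟩
      simp only [leftRay, mem_insert, mem_filter, mem_univ, true_and, Prod.ext_iff, Fin.lt_def,
        Fin.ext_iff, hx1]
      omega
    rw [hray, union_insert, ← insert_union]
    refine union_leftRay _ x (h.extend_left hxc (by simpa [hx1] using hc)
      (fun i j hij => hcols _ (by simpa using hij)) fun i j => pattern_insert_eq_true)
      (mem_insert_self x S) (forall_mem_insert _ _ _ |>.2 ⟨le_rfl, fun y hy => ?_⟩)
    exact hxc.le.trans (hcols y hy)
  · have hray : leftRay c = ∅ := by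
      ext ⟨i, j⟩
      simp only [leftRay, mem_filter, mem_univ, true_and, Fin.lt_def, notMem_empty, iff_false]
      omega
    rwa [hray, union_empty]
termination_by c.2.val

theorem union_downRay (S : Finset (Fin p × Fin q)) (c : Fin p × Fin q)
    (h : HasLinearEx (pattern S)) (hc : c ∈ S) (hrows : ∀ y ∈ S, y.1 ≤ c.1) :
    HasLinearEx (pattern (S ∪ downRay c)) := by
  by_cases hnext : c.1.val + 1 < p
  · obtain ⟨x, hx1, hx2⟩ : ∃ x : Fin p × Fin q, x.1.val = c.1.val + 1 ∧ x.2 = c.2 :=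
      ⟨(⟨c.1 + 1, hnext⟩, c.2), rfl, rfl⟩
    have hcx : c.1 < x.1 := Fin.lt_def.2 (by omega)
    have hray : downRay c = insert x (downRay x) := by
      ext ⟨i, j⟩
      simp only [downRay, mem_insert, mem_filter, mem_univ, true_and, Prod.ext_iff, Fin.lt_def,
        Fin.ext_iff, hx2]
      omega
    rw [hray, union_insert, ← insert_union]
    refine union_downRay _ x (h.extend_down hcx (by simpa [hx2] using hc)
      (fun i j hij => hrows _ (by simpa using hij)) fun i j => pattern_insert_eq_true)
      (mem_insert_self x S) (forall_mem_insert _ _ _ |>.2 ⟨le_rfl, fun y hy => ?_⟩)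
    exact (hrows y hy).trans hcx.le
  · have hray : downRay c = ∅ := by
      ext ⟨i, j⟩
      have := i.isLt
      simp only [downRay, mem_filter, mem_univ, true_and, Fin.lt_def, notMem_empty, iff_false]
      omega
    rwa [hray, union_empty]
termination_by p - c.1.val

theorem union_upRay (S : Finset (Fin p × Fin q)) (c : Fin p × Fin q)
    (h : HasLinearEx (pattern S)) (hc : c ∈ S) (hrows : ∀ y ∈ S, c.1 ≤ y.1) :
    HasLinearEx (pattern (S ∪ upRay c)) := by
  by_cases hnext : 0 < c.1.val
  · obtain ⟨x, hx1, hx2⟩ : ∃ x : Fin p × Fin q, x.1.val + 1 = c.1.val ∧ x.2 = c.2 :=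
      ⟨(⟨c.1 - 1, by omega⟩, c.2), by simp only; omega, rfl⟩
    have hxc : x.1 < c.1 := Fin.lt_def.2 (by omega)
    have hray : upRay c = insert x (upRay x) := by
      ext ⟨i, j⟩
      simp only [upRay, mem_insert, mem_filter, mem_univ, true_and, Prod.ext_iff, Fin.lt_def,
        Fin.ext_iff, hx2]
      omega
    rw [hray, union_insert, ← insert_union]
    refine union_upRay _ x (h.extend_up hxc (by simpa [hx2] using hc)
      (fun i j hij => hrows _ (by simpa using hij)) fun i j => pattern_insert_eq_true)
      (mem_insert_self x S) (forall_mem_insert _ _ _ |>.2 ⟨le_rfl, fun y hy => ?_⟩)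
    exact hxc.le.trans (hrows y hy)
  · have hray : upRay c = ∅ := by
      ext ⟨i, j⟩
      simp only [upRay, mem_filter, mem_univ, true_and, Fin.lt_def, notMem_empty, iff_false]
      omega
    rwa [hray, union_empty]
termination_by c.1.val

variable {S : Finset (Fin p × Fin q)} {c x : Fin p × Fin q}

theorem insert_of_le_corner (h : HasLinearEx (pattern S)) (hc : c ∈ S) (hle : ∀ y ∈ S, y ≤ c)
    (hcx : c ≤ x) (hline : x.1 = c.1 ∨ x.2 = c.2) : HasLinearEx (pattern (insert x S)) := by
  rcases eq_or_ne x c with rfl | hne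
  · rwa [insert_eq_of_mem hc]
  rcases hline with hrow | hcol
  · have hlt : c.2 < x.2 := lt_of_le_of_ne hcx.2 fun h => hne (Prod.ext hrow h.symm)
    exact h.extend_right hlt (by simpa [hrow] using hc)
      (fun i j hij => (hle _ (by simpa using hij)).2) fun i j => pattern_insert_eq_true
  · have hlt : c.1 < x.1 := lt_of_le_of_ne hcx.1 fun h => hne (Prod.ext h.symm hcol)
    exact h.extend_down hlt (by simpa [hcol] using hc)
      (fun i j hij => (hle _ (by simpa using hij)).1) fun i j => pattern_insert_eq_true

theorem union_image_of_isMonotoneRookPath {t : ℕ} {w : Fin (t + 1) → Fin p × Fin q}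
    (hw : IsMonotoneRookPath w) (h : HasLinearEx (pattern S)) (h0 : w 0 ∈ S)
    (hle : ∀ y ∈ S, y ≤ w 0) :
    HasLinearEx (pattern (S ∪ univ.image w)) := by
  have hmono : Monotone w := Fin.monotone_iff_le_succ.2 fun k => (hw k).1
  suffices hpre : ∀ k : Fin (t + 1),
      HasLinearEx (pattern (S ∪ ({j | j ≤ k} : Finset (Fin (t + 1))).image w)) by
    simpa [Fin.le_last] using hpre (Fin.last t)
  intro k
  induction k using Fin.induction with
  | zero =>
    have hzero : ({j | j ≤ 0} : Finset (Fin (t + 1))) = {0} := by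
      ext j
      simp
    rwa [hzero, image_singleton, union_eq_left.2 (singleton_subset_iff.2 h0)]
  | succ k ih =>
    have hsucc : ({j | j ≤ k.succ} : Finset (Fin (t + 1))) =
        insert k.succ ({j | j ≤ k.castSucc} : Finset (Fin (t + 1))) := by
      ext j
      simp only [mem_filter, mem_univ, true_and, mem_insert, Fin.le_def, Fin.ext_iff,
        Fin.val_succ, Fin.val_castSucc]
      omega
    rw [hsucc, image_insert, union_insert]
    refine ih.insert_of_le_corner (mem_union_right _ (mem_image_of_mem _ (by simp))) ?_
      (hw k).1 (hw k).2
    simp only [mem_union, mem_image, mem_filter, mem_univ, true_and]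
    rintro y (hy | ⟨j, hj, rfl⟩)
    · exact (hle y hy).trans (hmono (Fin.zero_le _))
    · exact hmono hj

end HasLinearEx

end ExtremalFunction

section Staircase

variable {nr nc t : ℕ} {p : Fin (t + 1) → Fin nr × Fin nc}

def staircaseCells (p : Fin (t + 1) → Fin nr × Fin nc) : Finset (Fin nr × Fin nc) :=
  {p 0} ∪ upRay (p 0) ∪ leftRay (p 0) ∪ univ.image p ∪ rightRay (p (Fin.last t)) ∪
    downRay (p (Fin.last t))

theorem IsMonotoneRookPath.hasLinearEx_pattern_staircaseCells (hp : IsMonotoneRookPath p) :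
    HasLinearEx (pattern (staircaseCells p)) := by
  have hmono : Monotone p := Fin.monotone_iff_le_succ.2 fun k => (hp k).1
  set S₀ := {p 0} ∪ upRay (p 0) ∪ leftRay (p 0)
  have hS₀ : ∀ y ∈ S₀, y ≤ p 0 := by
    simp only [S₀, upRay, leftRay, mem_union, mem_singleton, mem_filter, mem_univ, true_and]
    rintro y ((rfl | ⟨h2, h1⟩) | ⟨h1, h2⟩)
    · exact le_rfl
    · exact Prod.mk_le_mk.2 ⟨h1.le, h2.le⟩
    · exact Prod.mk_le_mk.2 ⟨h1.le, h2.le⟩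
  set S₁ := S₀ ∪ univ.image p
  have hS₁ : ∀ y ∈ S₁, y ≤ p (Fin.last t) := by
    simp only [S₁, mem_union, mem_image, mem_univ, true_and]
    rintro y (hy | ⟨k, rfl⟩)
    · exact (hS₀ y hy).trans (hmono (Fin.zero_le _))
    · exact hmono (Fin.le_last k)
  have hlast : p (Fin.last t) ∈ S₁ := mem_union_right _ (mem_image_of_mem _ (mem_univ _))
  have h₀ : HasLinearEx (pattern S₀) :=
    ((hasLinearEx_pattern_singleton _).union_upRay _ _ (mem_singleton_self _)
      (by simp)).union_leftRay _ _ (by simp) (by simp [upRay])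
  have h₁ : HasLinearEx (pattern S₁) :=
    h₀.union_image_of_isMonotoneRookPath hp (by simp [S₀]) hS₀
  refine (h₁.union_rightRay _ _ hlast fun y hy => (hS₁ y hy).2).union_downRay _ _
    (mem_union_left _ hlast) fun y hy => ?_
  rcases mem_union.1 hy with hy | hy
  · exact (hS₁ y hy).1
  · exact (mem_filter.1 hy).2.1.le

variable {A : Fin nr → Fin nc → Bool}

theorem DescribedBy.isMonotoneRookPath (hA : DescribedBy A t p) : IsMonotoneRookPath p := by
  intro k
  rcases hA.1 k with ⟨h1, h2⟩ | ⟨h1, h2⟩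
  · exact ⟨Prod.mk_le_mk.2 ⟨Fin.le_def.2 (by omega), h2.ge⟩, Or.inr h2⟩
  · exact ⟨Prod.mk_le_mk.2 ⟨h1.ge, Fin.le_def.2 (by omega)⟩, Or.inl h1⟩

theorem DescribedBy.eq_pattern_staircaseCells (hA : DescribedBy A t p) :
    A = pattern (staircaseCells p) := by
  funext i j
  rw [Bool.eq_iff_iff, hA.2 i j, pattern_eq_true]
  simp only [staircaseCells, upRay, leftRay, rightRay, downRay, mem_union, mem_singleton,
    mem_image, mem_filter, mem_univ, true_and]
  have hstart : (i, j) = p 0 → ∃ k, p k = (i, j) := fun h => ⟨0, h.symm⟩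
  tauto

theorem DescribedBy.hasLinearEx (hA : DescribedBy A t p) : HasLinearEx A :=
  hA.eq_pattern_staircaseCells ▸ hA.isMonotoneRookPath.hasLinearEx_pattern_staircaseCells

end Staircase

/-- The extremal function of any staircase 0-1 matrix is linear. -/
theorem stmt_18 {nr nc : ℕ} (A : Fin nr → Fin nc → Bool) (hA : IsStaircaseMatrix A) :
    ∃ C : ℝ, 0 < C ∧ ∀ n : ℕ, 0 < n → (mex n A : ℝ) ≤ C * n := by
  obtain ⟨C, hC⟩ : HasLinearEx A := by
    rcases hA with ⟨t, p, hd⟩ | ⟨t, p, hd⟩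
    · exact hd.hasLinearEx
    · exact hasLinearEx_revCols_iff.1 hd.hasLinearEx
  refine ⟨C + 1, by positivity, fun n _ => ?_⟩
  calc (mex n A : ℝ) ≤ C * n := by exact_mod_cast hC n
    _ ≤ (C + 1) * n := by gcongr; linarith
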